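/- The function Σ(r) = (6/π) cosh(r) log(coth(r)/2) for 0 < r ≤ arctanh(1/2) (and 0 otherwise) is a probability density: ∫₀^{arctanh(1/2)} (6/π) cosh(r) log(coth(r)/2) dr = 1. -/

import Mathlib

/-!
An antiderivative of `cosh r * log (coth r / 2)` is
`sinh r * log (cosh r / 2) - sinh r * log (sinh r) + arctan (sinh r)`; written with `negMulLog`
it is continuous at `0`, where it vanishes. At `b = arctanh (1 / 2) = log √3` we have
`cosh b = 2 * sinh b`, so the logarithmic terms cancel and the antiderivative equals
`arctan (1 / √3) = π / 6`. Since `coth r ≥ 2` on `(0, b]`, the integrand is nonnegative there,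
which makes it integrable although `log (coth r)` blows up at `0`.
-/

/-- Inverse hyperbolic tangent. -/
noncomputable def arctanh (x : ℝ) : ℝ := (1 / 2) * Real.log ((1 + x) / (1 - x))

open Real Set MeasureTheory intervalIntegral

noncomputable def coshLogCothHalfPrimitive (r : ℝ) : ℝ :=
  sinh r * log (cosh r / 2) + negMulLog (sinh r) + arctan (sinh r)

theorem continuous_coshLogCothHalfPrimitive : Continuous coshLogCothHalfPrimitive := by
  unfold coshLogCothHalfPrimitive
  have : Continuous fun r => log (cosh r / 2) :=
    (continuous_cosh.div_const 2).log fun r => by positivity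
  fun_prop

@[simp]
theorem coshLogCothHalfPrimitive_zero : coshLogCothHalfPrimitive 0 = 0 := by
  simp [coshLogCothHalfPrimitive]

theorem hasDerivAt_coshLogCothHalfPrimitive {x : ℝ} (hx : x ≠ 0) :
    HasDerivAt coshLogCothHalfPrimitive (cosh x * log (cosh x / sinh x / 2)) x := by
  have hsinh : sinh x ≠ 0 := sinh_ne_zero.mpr hx
  have hcosh : cosh x ≠ 0 := (cosh_pos x).ne'
  refine HasDerivAt.congr_deriv (f := coshLogCothHalfPrimitive)
    ((((hasDerivAt_sinh x).mul (((hasDerivAt_cosh x).div_const 2).log (by positivity))).add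
      ((hasDerivAt_negMulLog hsinh).comp x (hasDerivAt_sinh x))).add
      (hasDerivAt_sinh x).arctan) ?_
  have hlog : log (cosh x / sinh x / 2) = log (cosh x) - log (sinh x) - log 2 := by
    rw [log_div (div_ne_zero hcosh hsinh) two_ne_zero, log_div hcosh hsinh]
  rw [hlog, log_div hcosh two_ne_zero, ← cosh_sq']
  field_simp
  linear_combination -cosh_sq x

theorem cosh_sub_two_mul_sinh (r : ℝ) : cosh r - 2 * sinh r = (3 - exp r ^ 2) / (2 * exp r) := by
  rw [cosh_eq, sinh_eq, exp_neg]
  field_simp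
  ring

theorem two_mul_sinh_le_cosh {r : ℝ} (hr : r ≤ log √3) : 2 * sinh r ≤ cosh r := by
  have hexp : exp r ≤ √3 := (le_log_iff_exp_le (by positivity)).mp hr
  have hsq : exp r ^ 2 ≤ 3 := by
    calc exp r ^ 2 ≤ √3 ^ 2 := by gcongr
      _ = 3 := sq_sqrt (by norm_num)
  have : 0 ≤ cosh r - 2 * sinh r := by
    rw [cosh_sub_two_mul_sinh]
    exact div_nonneg (by linarith) (by positivity)
  linarith

theorem cosh_log_sqrt_three_eq_two_mul_sinh : cosh (log √3) = 2 * sinh (log √3) := by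
  have := cosh_sub_two_mul_sinh (log √3)
  rw [exp_log (by positivity), sq_sqrt (by norm_num), sub_self, zero_div] at this
  linarith

theorem sinh_log_sqrt_three : sinh (log √3) = (√3)⁻¹ := by
  rw [sinh_log (by positivity)]
  have h3 : √3 * √3 = 3 := mul_self_sqrt (by norm_num)
  field_simp
  linarith

theorem arctanh_one_half : arctanh (1 / 2) = log √3 := by
  rw [arctanh, log_sqrt (by norm_num)]
  norm_num
  ring

theorem coshLogCothHalfPrimitive_log_sqrt_three : coshLogCothHalfPrimitive (log √3) = π / 6 := by
  rw [coshLogCothHalfPrimitive, negMulLog, cosh_log_sqrt_three_eq_two_mul_sinh,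
    mul_div_cancel_left₀ _ two_ne_zero, sinh_log_sqrt_three, arctan_inv_sqrt_three]
  ring

theorem integral_cosh_mul_log_coth_half :
    ∫ r in (0 : ℝ)..log √3, cosh r * log (cosh r / sinh r / 2) = π / 6 := by
  have hb : (0 : ℝ) ≤ log √3 := log_nonneg (by simp [one_le_sqrt])
  have hderiv : ∀ x ∈ Ioo 0 (log √3), HasDerivAt coshLogCothHalfPrimitive
      (cosh x * log (cosh x / sinh x / 2)) x :=
    fun x hx => hasDerivAt_coshLogCothHalfPrimitive hx.1.ne'
  have hnonneg : ∀ x ∈ Ioo 0 (log √3), 0 ≤ cosh x * log (cosh x / sinh x / 2) := by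
    intro x ⟨hx0, hxb⟩
    have hsinh : 0 < sinh x := sinh_pos_iff.mpr hx0
    refine mul_nonneg (cosh_pos x).le (log_nonneg ?_)
    rw [le_div_iff₀ two_pos, one_mul, le_div_iff₀ hsinh]
    linarith [two_mul_sinh_le_cosh hxb.le]
  have hint :
      IntervalIntegrable (fun x => cosh x * log (cosh x / sinh x / 2)) volume 0 (log √3) := by
    apply intervalIntegrable_deriv_of_nonneg continuous_coshLogCothHalfPrimitive.continuousOn <;>
      rwa [min_eq_left hb, max_eq_right hb]
  rw [integral_eq_sub_of_hasDerivAt_of_le hb continuous_coshLogCothHalfPrimitive.continuousOn hderiv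
    hint, coshLogCothHalfPrimitive_log_sqrt_three, coshLogCothHalfPrimitive_zero, sub_zero]

theorem rectangular_density_integrates_to_one :
    ∫ r in (0 : ℝ)..arctanh (1 / 2),
        (6 / Real.pi) * Real.cosh r * Real.log ((Real.cosh r / Real.sinh r) / 2) = 1 := by
  simp_rw [arctanh_one_half, mul_assoc]
  rw [intervalIntegral.integral_const_mul, integral_cosh_mul_log_coth_half]
  field_simp
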